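/- With A_m ⊂ Z^{m+1} and W(A_m) = S_{m+1} as above, suppose H ≤ S_{m+1} satisfies: (i) the sublattice generated by p·A_m and {gα − α : g ∈ H, α ∈ A_m} contains no roots, and (ii) A_m has no nonzero H-invariant vector. Then H acts transitively on {v_1,…,v_{m+1}}, hence (m+1) divides |H|; combined with H being a p-group, m+1 is a power of p. -/

import Mathlib

private def ee {m : ℕ} (i : Fin (m+1)) : Fin (m+1) → ℤ := Pi.single i 1

private lemma ee_sum {m : ℕ} (i j : Fin (m+1)) : ∑ k, (ee i - ee j) k = 0 := by
  simp [ee, Pi.sub_apply, Finset.sum_sub_distrib, Finset.sum_pi_single]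

private lemma ee_act {m : ℕ} (g : Equiv.Perm (Fin (m+1))) (i j : Fin (m+1)) :
    (fun k => (ee i - ee j) (g⁻¹ k)) = ee (g i) - ee (g j) := by
  funext k
  have h1 : (g⁻¹ k = i) ↔ (k = g i) := by constructor <;> intro h <;> subst h <;> simp
  have h2 : (g⁻¹ k = j) ↔ (k = g j) := by constructor <;> intro h <;> subst h <;> simp
  simp only [ee, Pi.sub_apply, Pi.single_apply, h1, h2]

private lemma ee_root {m : ℕ} (i j : Fin (m+1)) (hne : i ≠ j) :
    ∑ k, (ee i - ee j) k * (ee i - ee j) k = 2 := by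
  have h : ∀ k, (ee i - ee j) k * (ee i - ee j) k
      = (if k = i then 1 else 0) + (if k = j then 1 else 0) := by
    intro k
    simp only [ee, Pi.sub_apply, Pi.single_apply]
    split_ifs with h1 h2 <;> try ring
    exact absurd (h1.symm.trans h2) hne
  rw [Finset.sum_congr rfl (fun k _ => h k), Finset.sum_add_distrib]
  simp [Finset.sum_ite_eq']


/-- With `A_m ⊂ ℤ^{m+1}` (vectors of coordinate sum zero) and
`W(A_m) = S_{m+1}` permuting coordinates, suppose `H ≤ S_{m+1}` satisfies: (i) the
sublattice generated by `p·A_m` and `{gα − α : g ∈ H, α ∈ A_m}` contains no roots, and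
(ii) `A_m` has no nonzero `H`-invariant vector.  Then `H` acts transitively on the `m+1`
basis vectors, hence `(m+1) ∣ |H|`; combined with `H` being a `p`-group, `m+1` is a power
of `p`. -/
theorem stmt_5 (p : ℕ) (hp : p.Prime) (hodd : Odd p) (m : ℕ)
    (H : Subgroup (Equiv.Perm (Fin (m + 1))))
    (hroot : ∀ x ∈ Submodule.span ℤ
      {x : Fin (m + 1) → ℤ |
        (∃ a : Fin (m + 1) → ℤ, (∑ i, a i = 0) ∧ x = (p : ℤ) • a) ∨
        (∃ g ∈ H, ∃ a : Fin (m + 1) → ℤ, (∑ i, a i = 0) ∧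
          x = (fun i => a (g⁻¹ i)) - a)},
      (∑ i, x i * x i) ≠ 2)
    (hinv : ∀ a : Fin (m + 1) → ℤ, (∑ i, a i = 0) →
      (∀ g ∈ H, (fun i => a (g⁻¹ i)) = a) → a = 0) :
    (∀ i j : Fin (m + 1), ∃ g ∈ H, g i = j) ∧
    (m + 1) ∣ Nat.card H ∧ ∃ k : ℕ, m + 1 = p ^ k := by
  classical
  -- Step 1: transitivity
  have htrans : ∀ i j : Fin (m + 1), ∃ g ∈ H, g i = j := by
    intro i j
    by_contra hc
    push_neg at hc
    set S : Finset (Equiv.Perm (Fin (m+1))) := Finset.univ.filter (· ∈ H) with hS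
    have hmemS : ∀ g, g ∈ S ↔ g ∈ H := by intro g; simp [hS]
    set a : Fin (m+1) → ℤ :=
      fun k => ∑ g ∈ S, ((if g i = k then (1:ℤ) else 0) - (if g j = k then 1 else 0)) with ha
    have hsum : ∑ k, a k = 0 := by
      rw [ha]
      rw [Finset.sum_comm]
      simp [Finset.sum_sub_distrib, Finset.sum_ite_eq']
    have hfix : ∀ h ∈ H, (fun k => a (h⁻¹ k)) = a := by
      intro h hh
      funext k
      simp only [ha]
      refine Finset.sum_nbij' (fun g => h * g) (fun g => h⁻¹ * g) ?_ ?_ ?_ ?_ ?_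
      · intro g hg; rw [hmemS] at *; exact H.mul_mem hh hg
      · intro g hg; rw [hmemS] at *; exact H.mul_mem (H.inv_mem hh) hg
      · intro g _; group
      · intro g _; group
      · intro g _
        have e1 : (g i = h⁻¹ k) ↔ ((h * g) i = k) := by
          rw [Equiv.Perm.mul_apply]; exact Equiv.Perm.eq_inv_iff_eq
        have e2 : (g j = h⁻¹ k) ↔ ((h * g) j = k) := by
          rw [Equiv.Perm.mul_apply]; exact Equiv.Perm.eq_inv_iff_eq
        simp only [e1, e2]
    have haz : a = 0 := hinv a hsum hfix
    set T : Finset (Fin (m+1)) := S.image (fun g => g i) with hT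
    have hTsum : ∑ k ∈ T, a k = S.card := by
      simp only [ha]
      rw [Finset.sum_comm]
      have : ∀ g ∈ S, ∑ k ∈ T, ((if g i = k then (1:ℤ) else 0) - (if g j = k then 1 else 0))
          = 1 := by
        intro g hg
        rw [Finset.sum_sub_distrib, Finset.sum_ite_eq, Finset.sum_ite_eq]
        have h1 : g i ∈ T := Finset.mem_image_of_mem _ hg
        have h2 : g j ∉ T := by
          intro hmem
          obtain ⟨g', hg', hgg'⟩ := Finset.mem_image.mp hmem
          exact hc (g⁻¹ * g') (H.mul_mem (H.inv_mem ((hmemS g).mp hg)) ((hmemS g').mp hg'))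
            (by simp [Equiv.Perm.mul_apply, hgg'])
        simp [h1, h2]
      rw [Finset.sum_congr rfl this]
      simp
    have hone : (1 : Equiv.Perm (Fin (m+1))) ∈ S := (hmemS 1).mpr H.one_mem
    have h0 : (S.card : ℤ) = 0 := by rw [← hTsum]; simp [haz]
    have h0' : S.card = 0 := by exact_mod_cast h0
    simp [Finset.card_eq_zero] at h0'
    rw [h0'] at hone
    simp at hone
  refine ⟨htrans, ?_, ?_⟩
  -- Step 2: divisibility via orbit-stabilizer
  · have horb : MulAction.orbit H (0 : Fin (m+1)) = Set.univ := by
      ext j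
      simp only [Set.mem_univ, iff_true]
      obtain ⟨g, hg, hgj⟩ := htrans 0 j
      exact ⟨⟨g, hg⟩, hgj⟩
    have h1 : Nat.card (MulAction.orbit H (0 : Fin (m+1))) = m + 1 := by
      rw [horb, Nat.card_coe_set_eq, Set.ncard_univ, Nat.card_eq_fintype_card,
        Fintype.card_fin]
    have h2 := Nat.card_congr (MulAction.orbitEquivQuotientStabilizer H (0 : Fin (m+1)))
    rw [h1] at h2
    have h3 := Subgroup.card_quotient_dvd_card (MulAction.stabilizer H (0 : Fin (m+1)))
    rwa [← h2] at h3
  -- Step 3: m+1 is a power of p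
  · set L := Submodule.span ℤ
      {x : Fin (m + 1) → ℤ |
        (∃ a : Fin (m + 1) → ℤ, (∑ i, a i = 0) ∧ x = (p : ℤ) • a) ∨
        (∃ g ∈ H, ∃ a : Fin (m + 1) → ℤ, (∑ i, a i = 0) ∧
          x = (fun i => a (g⁻¹ i)) - a)} with hL
    set φ : Fin (m+1) → ((Fin (m+1) → ℤ) ⧸ L) :=
      fun j => L.mkQ (ee j - ee 0) with hφ
    have hq0 : ∀ x, L.mkQ x = 0 ↔ x ∈ L := by
      intro x; rw [Submodule.mkQ_apply]; exact Submodule.Quotient.mk_eq_zero L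
    have hφ0 : φ 0 = 0 := by simp [hφ]
    have hφsub : ∀ i j, φ i - φ j = L.mkQ (ee i - ee j) := by
      intro i j
      rw [hφ, ← map_sub]
      congr 1
      abel
    have hφg : ∀ g ∈ H, ∀ i, φ (g i) = φ i + φ (g 0) := by
      intro g hg i
      have hmem : (ee (g i) - ee (g 0)) - (ee i - ee 0) ∈ L :=
        Submodule.subset_span (Or.inr ⟨g, hg, ee i - ee 0, ee_sum i 0, by rw [ee_act]⟩)
      have := (hq0 _).mpr hmem
      rw [map_sub, ← hφsub, ← hφsub, sub_eq_zero] at this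
      rw [hφ0, sub_zero] at this
      rw [← this]
      abel
    have hφinj : Function.Injective φ := by
      intro i j hij
      by_contra hne
      have : L.mkQ (ee i - ee j) = 0 := by rw [← hφsub, hij, sub_self]
      have hmem : ee i - ee j ∈ L := (hq0 _).mp this
      exact hroot _ hmem (ee_root i j hne)
    have hps : ∀ j, (p : ℤ) • φ j = 0 := by
      intro j
      have hmem : (p:ℤ) • (ee j - ee 0) ∈ L :=
        Submodule.subset_span (Or.inl ⟨ee j - ee 0, ee_sum j 0, rfl⟩)
      rw [hφ, ← map_smul]
      exact (hq0 _).mpr hmem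
    -- range φ is an additive subgroup
    have hrange_add : ∀ x ∈ Set.range φ, ∀ y ∈ Set.range φ, x + y ∈ Set.range φ := by
      rintro _ ⟨i, rfl⟩ _ ⟨j, rfl⟩
      obtain ⟨g, hg, hgi⟩ := htrans 0 i
      exact ⟨g j, by rw [hφg g hg j, hgi]; exact add_comm _ _⟩
    have hrange_neg : ∀ x ∈ Set.range φ, -x ∈ Set.range φ := by
      rintro _ ⟨i, rfl⟩
      obtain ⟨g, hg, hgi⟩ := htrans 0 i
      refine ⟨g⁻¹ 0, ?_⟩
      have := hφg g hg (g⁻¹ 0)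
      rw [← Equiv.Perm.mul_apply, mul_inv_cancel, Equiv.Perm.one_apply, hφ0, hgi] at this
      linear_combination (norm := module) -this
    set T : AddSubgroup ((Fin (m+1) → ℤ) ⧸ L) :=
      { carrier := Set.range φ
        add_mem' := fun hx hy => hrange_add _ hx _ hy
        zero_mem' := ⟨0, hφ0⟩
        neg_mem' := fun hx => hrange_neg _ hx } with hTdef
    have hb : Function.Bijective (fun i : Fin (m+1) => (⟨φ i, ⟨i, rfl⟩⟩ : T)) := by
      constructor
      · intro a b hab
        exact hφinj (congrArg Subtype.val hab)
      · rintro ⟨t, i, rfl⟩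
        exact ⟨i, rfl⟩
    have hcardT : Nat.card T = m + 1 := by
      rw [← Nat.card_eq_of_bijective _ hb, Nat.card_eq_fintype_card, Fintype.card_fin]
    haveI : Finite T := Finite.of_surjective _ hb.surjective
    haveI : Fact p.Prime := ⟨hp⟩
    have hPG : IsPGroup p (Multiplicative T) := by
      intro x
      refine ⟨1, ?_⟩
      have ht : ∀ t : T, p • t = (0 : T) := by
        intro t
        ext
        obtain ⟨j, hj⟩ := t.2
        show p • (t : (Fin (m+1) → ℤ) ⧸ L) = 0
        rw [← hj, ← Nat.cast_smul_eq_nsmul ℤ]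
        exact hps j
      show x ^ (p ^ 1) = 1
      rw [pow_one]
      refine Multiplicative.toAdd.injective ?_
      rw [toAdd_pow, toAdd_one]
      exact ht x.toAdd
    obtain ⟨k, hk⟩ := IsPGroup.iff_card.mp hPG
    refine ⟨k, ?_⟩
    rw [← hcardT, ← hk]
    exact (Nat.card_congr Multiplicative.toAdd).symm
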